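/- arXiv:0707.4399 — 2 statements merged into one kernel-verified Lean document; each statement's English description precedes it below -/
import Mathlib

section
/- For every n ≥ 1, the map sending a permutation σ of {1,…,n} to its step matrix face is injective; consequently there are exactly n! step matrix faces. -/
/-- Split a list into maximal runs with respect to the relation `r`. -/
def splitRuns {α : Type*} (r : α → α → Bool) : List α → List (List α)
  | [] => []
  | [x] => [[x]]
  | x :: y :: rest =>
    match splitRuns r (y :: rest) with
    | [] => [[x]]
    | s :: ss => if r x y then (x :: s) :: ss else [x] :: s :: ss

/-- The word `σ(1) σ(2) … σ(n)` of a permutation of `{1,…,n}`. -/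
def permWord (n : ℕ) (σ : Equiv.Perm (Fin n)) : List ℕ :=
  List.ofFn (fun i => (σ i : ℕ) + 1)

/-- A face: a pair of ordered partitions, each a list of blocks. -/
abbrev Face := List (Finset ℕ) × List (Finset ℕ)

/-- The step matrix face of a permutation: the maximal decreasing runs of its word
(as sets, in order of occurrence) paired with the maximal increasing runs. -/
def stepFace (n : ℕ) (σ : Equiv.Perm (Fin n)) : Face :=
  ((splitRuns (fun a b => decide (b < a)) (permWord n σ)).map List.toFinset,
   (splitRuns (fun a b => decide (a < b)) (permWord n σ)).map List.toFinset)

/-- `π` is an ordered partition of `{1,…,n}`: a finite sequence of nonempty pairwise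
disjoint subsets whose union is `{1,…,n}`. -/
def IsOrderedPartition (n : ℕ) (π : List (Finset ℕ)) : Prop :=
  (∀ b ∈ π, b.Nonempty) ∧ π.Pairwise Disjoint ∧ π.foldr (· ∪ ·) ∅ = Finset.Icc 1 n

/-- The `M`-shift at (0-based) index `j`: remove `M` from block `j` and adjoin it to
block `j+1`. -/
def blockShift (π : List (Finset ℕ)) (j : ℕ) (M : Finset ℕ) : List (Finset ℕ) :=
  (π.set j (π.getD j ∅ \ M)).set (j + 1) (π.getD (j + 1) ∅ ∪ M)

/-- `M` is an admissible subset of the `j`-th block of `π` with respect to `μ`: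
`M` is a nonempty proper subset of `π_j` (with `j` not the last index),
`min M > max π_{j+1}`, and if `min M ∈ μ_{k₀}` then `π_{j+1}` is disjoint from
`μ_{k₀} ∪ … ∪ μ_r`. -/
def Admissible (π μ : List (Finset ℕ)) (j : ℕ) (M : Finset ℕ) : Prop :=
  j + 1 < π.length ∧ M.Nonempty ∧ M ⊂ π.getD j ∅ ∧
    (∀ x ∈ M, ∀ y ∈ π.getD (j + 1) ∅, y < x) ∧
    ∃ k₀ < μ.length,
      (∃ m ∈ M, (∀ x ∈ M, m ≤ x) ∧ m ∈ μ.getD k₀ ∅) ∧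
      ∀ i, k₀ ≤ i → i < μ.length → π.getD (j + 1) ∅ ∩ μ.getD i ∅ = ∅

/-- A right shift of a face at index `j`: an admissible `M`-shift on the first
partition, admissibility taken with respect to the reverse of the second. -/
def RightShift (f g : Face) (j : ℕ) : Prop :=
  ∃ M, Admissible f.1 f.2.reverse j M ∧ g = (blockShift f.1 j M, f.2)

/-- A down shift of a face at index `j`: an admissible `M`-shift on the reverse of
the second partition, admissibility taken with respect to the first. -/
def DownShift (f g : Face) (j : ℕ) : Prop :=
  ∃ M, Admissible f.2.reverse f.1 j M ∧ g = (f.1, (blockShift f.2.reverse j M).reverse)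

/-- A sequence of shifts of the given kind, performed at strictly increasing indices,
all of which are at least `i`. -/
inductive ShiftSeq (step : Face → Face → ℕ → Prop) : ℕ → Face → Face → Prop
  | refl (i : ℕ) (f : Face) : ShiftSeq step i f f
  | cons (i j : ℕ) (f g h : Face) : i ≤ j → step f g j →
      ShiftSeq step (j + 1) g h → ShiftSeq step i f h

/-- `g` is a derived face of `f`: obtained by a sequence of right shifts at strictly
increasing indices followed by a sequence of down shifts at strictly increasing
indices. -/
def IsDerivedFace (f g : Face) : Prop :=
  ∃ m : Face, ShiftSeq RightShift 0 f m ∧ ShiftSeq DownShift 0 m g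

/-- The Saneblidze–Umble diagonal term set `Δ_n`: all derived faces of step matrix
faces of permutations of `{1,…,n}`. -/
def SUDiagonal (n : ℕ) : Set Face :=
  {f | ∃ σ : Equiv.Perm (Fin n), IsDerivedFace (stepFace n σ) f}

/-- An ordered partition is derived consecutive if for each `j`, the integer interval
`[min π_j, max π_j]` is contained in `π_1 ∪ … ∪ π_j`. -/
def DerivedConsecutive (π : List (Finset ℕ)) : Prop :=
  ∀ j < π.length, ∀ x : ℕ,
    (∃ a ∈ π.getD j ∅, a ≤ x) → (∃ b ∈ π.getD j ∅, x ≤ b) →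
    x ∈ (π.take (j + 1)).foldr (· ∪ ·) ∅

/-- The associahedron term set `K_n`: the faces of `Δ_n` in which both ordered
partitions are derived consecutive. -/
def AssocTerms (n : ℕ) : Set Face :=
  {f ∈ SUDiagonal n | DerivedConsecutive f.1 ∧ DerivedConsecutive f.2}

/-! Each maximal decreasing run of a word is strictly decreasing, so it is recovered from its
set of letters by sorting that set in decreasing order; concatenating the runs gives back the
word. Hence the first partition of the step face alone determines the permutation. -/

section SplitRuns

variable {α : Type*} (r : α → α → Bool)

theorem flatten_splitRuns : ∀ l : List α, (splitRuns r l).flatten = l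
  | [] => rfl
  | [_] => rfl
  | x :: y :: rest => by
    have ih := flatten_splitRuns (y :: rest)
    rw [splitRuns]
    rcases h : splitRuns r (y :: rest) with _ | ⟨s, ss⟩
    · simp [h] at ih
    · rw [h] at ih
      split_ifs <;> simp [← ih]

theorem exists_splitRuns_cons (x : α) :
    ∀ l : List α, ∃ s ss, splitRuns r (x :: l) = (x :: s) :: ss
  | [] => ⟨[], [], rfl⟩
  | y :: rest => by
    obtain ⟨s, ss, h⟩ := exists_splitRuns_cons y rest
    rw [splitRuns, h]
    split_ifs
    exacts [⟨_, _, rfl⟩, ⟨_, _, rfl⟩]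

theorem isChain_of_mem_splitRuns :
    ∀ l : List α, ∀ s ∈ splitRuns r l, s.IsChain (fun a b => r a b)
  | [] => by simp [splitRuns]
  | [x] => by simp [splitRuns]
  | x :: y :: rest => by
    have ih := isChain_of_mem_splitRuns (y :: rest)
    obtain ⟨s, ss, h⟩ := exists_splitRuns_cons r y rest
    rw [h] at ih
    rw [splitRuns, h]
    split_ifs with hxy
    · simp only [List.mem_cons, forall_eq_or_imp] at ih ⊢
      exact ⟨ih.1.cons_cons hxy, ih.2⟩
    · simp only [List.mem_cons, forall_eq_or_imp] at ih ⊢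
      exact ⟨List.isChain_singleton x, ih⟩

end SplitRuns

section DecreasingRuns

variable {α : Type*} [LinearOrder α]

theorem sortedGT_of_mem_splitRuns {l s : List α}
    (hs : s ∈ splitRuns (fun a b => decide (b < a)) l) : s.SortedGT :=
  List.sortedGT_iff_isChain.mpr <| by
    simpa using isChain_of_mem_splitRuns _ l s hs

theorem List.SortedGT.sort_toFinset {s : List α} (hs : s.SortedGT) :
    s.toFinset.sort (· ≥ ·) = s :=
  (List.toFinset_sort _ hs.nodup).mpr hs.sortedGE.pairwise

theorem map_sort_map_toFinset_splitRuns_gt (l : List α) :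
    ((splitRuns (fun a b => decide (b < a)) l).map List.toFinset).map (·.sort (· ≥ ·)) =
      splitRuns (fun a b => decide (b < a)) l := by
  rw [List.map_map]
  exact (List.map_congr_left fun s hs => (sortedGT_of_mem_splitRuns hs).sort_toFinset).trans
    (List.map_id' _)

theorem map_toFinset_splitRuns_gt_injective :
    Function.Injective
      fun l : List α => (splitRuns (fun a b => decide (b < a)) l).map List.toFinset := by
  intro l₁ l₂ h
  rw [← flatten_splitRuns _ l₁, ← flatten_splitRuns _ l₂, ← map_sort_map_toFinset_splitRuns_gt l₁,
    ← map_sort_map_toFinset_splitRuns_gt l₂]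
  exact congrArg (fun L => (L.map (·.sort (· ≥ ·))).flatten) h

end DecreasingRuns

theorem permWord_injective (n : ℕ) : Function.Injective (permWord n) := fun σ τ h =>
  Equiv.ext fun i => Fin.ext <| by simpa using congrFun (List.ofFn_injective h) i

theorem stepFace_injective_general (n : ℕ) :
    Function.Injective (stepFace n) ∧
      ((Finset.univ : Finset (Equiv.Perm (Fin n))).image (stepFace n)).card =
        Nat.factorial n := by
  have hinj : Function.Injective (stepFace n) := fun σ τ h =>
    permWord_injective n (map_toFinset_splitRuns_gt_injective (congrArg Prod.fst h))
  refine ⟨hinj, ?_⟩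
  rw [Finset.card_image_of_injective _ hinj, Finset.card_univ, Fintype.card_perm,
    Fintype.card_fin]

/-- For every `n ≥ 1`, the map sending a permutation of `{1,…,n}` to its step
matrix face is injective; consequently there are exactly `n!` step matrix faces. -/
theorem stepFace_injective (n : ℕ) (hn : 1 ≤ n) :
    Function.Injective (stepFace n) ∧
      ((Finset.univ : Finset (Equiv.Perm (Fin n))).image (stepFace n)).card =
        Nat.factorial n :=
  stepFace_injective_general n
end

section
/- The Saneblidze–Umble diagonal term set Δ_4 has exactly 50 elements. -/
/-!
Every shift moves a subset of one block into the next at an index below the number of blocks,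
and shifts preserve the number of blocks. Hence the faces reachable by shifts at strictly
increasing indices form a finite set, computed by recursion on the index with the admissible
subsets of a block found among its subsets. `Δ_4` is the union of these sets over the 24
permutations of `{1,2,3,4}`, and its cardinality is evaluated.
-/

open Finset

theorem admissible_iff {π μ : List (Finset ℕ)} {j : ℕ} {M : Finset ℕ} :
    Admissible π μ j M ↔ j + 1 < π.length ∧ M.Nonempty ∧ M ⊂ π.getD j ∅ ∧
      (∀ x ∈ M, ∀ y ∈ π.getD (j + 1) ∅, y < x) ∧
      ∃ k₀ < μ.length,
        (∃ m ∈ M, (∀ x ∈ M, m ≤ x) ∧ m ∈ μ.getD k₀ ∅) ∧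
        ∀ i < μ.length, k₀ ≤ i → π.getD (j + 1) ∅ ∩ μ.getD i ∅ = ∅ := by
  simp only [Admissible, imp.swap]

instance (π μ : List (Finset ℕ)) (j : ℕ) : DecidablePred (Admissible π μ j) := fun _ =>
  decidable_of_iff _ admissible_iff.symm

def admissibleSubsets (π μ : List (Finset ℕ)) (j : ℕ) : Finset (Finset ℕ) :=
  (π.getD j ∅).powerset.filter (Admissible π μ j)

theorem mem_admissibleSubsets {π μ : List (Finset ℕ)} {j : ℕ} {M : Finset ℕ} :
    M ∈ admissibleSubsets π μ j ↔ Admissible π μ j M := by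
  simp only [admissibleSubsets, mem_filter, mem_powerset, and_iff_right_iff_imp]
  exact fun h => h.2.2.1.subset

theorem Admissible.lt_length {π μ : List (Finset ℕ)} {j : ℕ} {M : Finset ℕ}
    (h : Admissible π μ j M) : j < π.length :=
  Nat.lt_of_succ_lt h.1

theorem length_blockShift (π : List (Finset ℕ)) (j : ℕ) (M : Finset ℕ) :
    (blockShift π j M).length = π.length := by
  simp [blockShift]

def rightShifts (f : Face) (j : ℕ) : Finset Face :=
  (admissibleSubsets f.1 f.2.reverse j).image fun M => (blockShift f.1 j M, f.2)

def downShifts (f : Face) (j : ℕ) : Finset Face :=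
  (admissibleSubsets f.2.reverse f.1 j).image fun M =>
    (f.1, (blockShift f.2.reverse j M).reverse)

theorem rightShift_iff_mem_rightShifts {f g : Face} {j : ℕ} :
    RightShift f g j ↔ g ∈ rightShifts f j := by
  simp only [RightShift, rightShifts, mem_image, mem_admissibleSubsets]
  exact exists_congr fun _ => and_congr_right' eq_comm

theorem downShift_iff_mem_downShifts {f g : Face} {j : ℕ} :
    DownShift f g j ↔ g ∈ downShifts f j := by
  simp only [DownShift, downShifts, mem_image, mem_admissibleSubsets]
  exact exists_congr fun _ => and_congr_right' eq_comm

theorem RightShift.lt_length_and_length_eq {f g : Face} {j : ℕ} (h : RightShift f g j) :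
    j < f.1.length ∧ g.1.length = f.1.length := by
  obtain ⟨M, hM, rfl⟩ := h
  exact ⟨hM.lt_length, length_blockShift _ _ _⟩

theorem DownShift.lt_length_and_length_eq {f g : Face} {j : ℕ} (h : DownShift f g j) :
    j < f.2.length ∧ g.2.length = f.2.length := by
  obtain ⟨M, hM, rfl⟩ := h
  simpa [length_blockShift] using hM.lt_length

/-- The targets of the shift sequences from `f` at indices `≥ i` of at most `fuel` shifts.
Taking `fuel = len f` loses nothing, since the indices increase strictly and stay below `len f`. -/
def shiftSeqTargets (shifts : Face → ℕ → Finset Face) (len : Face → ℕ) :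
    ℕ → ℕ → Face → Finset Face
  | 0, _, f => {f}
  | fuel + 1, i, f =>
    insert f ((Ico i (len f)).biUnion fun j =>
      (shifts f j).biUnion (shiftSeqTargets shifts len fuel (j + 1)))

theorem shiftSeq_iff_mem_shiftSeqTargets {step : Face → Face → ℕ → Prop}
    {shifts : Face → ℕ → Finset Face} {len : Face → ℕ}
    (hstep : ∀ {f g j}, step f g j ↔ g ∈ shifts f j)
    (hlen : ∀ {f g j}, step f g j → j < len f ∧ len g = len f)
    (fuel : ℕ) {i : ℕ} {f : Face} (hf : len f ≤ fuel + i) (h : Face) :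
    ShiftSeq step i f h ↔ h ∈ shiftSeqTargets shifts len fuel i f := by
  induction fuel generalizing i f with
  | zero =>
    simp only [shiftSeqTargets, mem_singleton]
    constructor
    · rintro (_ | ⟨_, j, _, g, _, hij, hs, -⟩)
      · rfl
      · have := (hlen hs).1
        omega
    · rintro rfl
      exact .refl _ _
  | succ fuel ih =>
    simp only [shiftSeqTargets, mem_insert, mem_biUnion, mem_Ico]
    constructor
    · rintro (_ | ⟨_, j, _, g, _, hij, hs, hseq⟩)
      · exact Or.inl rfl
      · obtain ⟨hj, hg⟩ := hlen hs
        exact Or.inr ⟨j, ⟨hij, hj⟩, g, hstep.1 hs, (ih (by omega)).1 hseq⟩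
    · rintro (rfl | ⟨j, ⟨hij, -⟩, g, hg, hh⟩)
      · exact .refl _ _
      · have hs := hstep.2 hg
        have hlen_eq := (hlen hs).2
        exact .cons _ j _ g _ hij hs ((ih (by omega)).2 hh)

def derivedFaces (f : Face) : Finset Face :=
  (shiftSeqTargets rightShifts (·.1.length) f.1.length 0 f).biUnion fun m =>
    shiftSeqTargets downShifts (·.2.length) m.2.length 0 m

theorem isDerivedFace_iff_mem_derivedFaces {f g : Face} :
    IsDerivedFace f g ↔ g ∈ derivedFaces f := by
  have right (m : Face) :=
    shiftSeq_iff_mem_shiftSeqTargets (step := RightShift) (shifts := rightShifts)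
      (len := (·.1.length)) rightShift_iff_mem_rightShifts RightShift.lt_length_and_length_eq f.1.length
      (i := 0) (f := f) le_rfl m
  have down (m : Face) :=
    shiftSeq_iff_mem_shiftSeqTargets (step := DownShift) (shifts := downShifts)
      (len := (·.2.length)) downShift_iff_mem_downShifts DownShift.lt_length_and_length_eq m.2.length
      (i := 0) (f := m) le_rfl g
  simp only [IsDerivedFace, derivedFaces, mem_biUnion, right, down]

def suDiagonalFinset (n : ℕ) : Finset Face :=
  univ.biUnion fun σ : Equiv.Perm (Fin n) => derivedFaces (stepFace n σ)

theorem coe_suDiagonalFinset (n : ℕ) : (suDiagonalFinset n : Set Face) = SUDiagonal n := by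
  ext f
  simp [suDiagonalFinset, SUDiagonal, isDerivedFace_iff_mem_derivedFaces]

/-- The Saneblidze–Umble diagonal term set Δ_4 has exactly 50 elements. -/
theorem delta_card_4 : (SUDiagonal 4).ncard = 50 := by
  rw [← coe_suDiagonalFinset, Set.ncard_coe_finset]
  decide
end
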